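/- arXiv:1802.04447 — 4 statements merged into one kernel-verified Lean document; each statement's English description precedes it below -/
import Mathlib

section
/- Let W ∈ ℝ^{N×N} be a symmetric matrix with nonnegative entries and positive degrees, with normalized Laplacian L, and let W_c = P W Pᵀ be its coarse graph with respect to a partition of {1,…,N} into n nonempty parts, with normalized Laplacian L_c. If λ(1) ≤ … ≤ λ(N) are the eigenvalues of L and λ_c(1) ≤ … ≤ λ_c(n) are the eigenvalues of L_c, then for every i with 1 ≤ i ≤ n it holds that λ(i) ≤ λ_c(i) ≤ λ(i + N − n). -/
open Matrix BigOperators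

noncomputable section

/-- Degree of node `i`: the `i`-th row sum of the weight matrix. -/
def deg {N : ℕ} (W : Matrix (Fin N) (Fin N) ℝ) (i : Fin N) : ℝ := ∑ j, W i j

/-- `D^{-1/2}`: the diagonal matrix of inverse square roots of degrees. -/
def invSqrtDeg {N : ℕ} (W : Matrix (Fin N) (Fin N) ℝ) : Matrix (Fin N) (Fin N) ℝ :=
  Matrix.diagonal fun i => (Real.sqrt (deg W i))⁻¹

/-- Normalized Laplacian `L = I - D^{-1/2} W D^{-1/2}`. -/
def normLap {N : ℕ} (W : Matrix (Fin N) (Fin N) ℝ) : Matrix (Fin N) (Fin N) ℝ :=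
  1 - invSqrtDeg W * W * invSqrtDeg W

/-- Random-walk transition matrix `D^{-1} W`. -/
def rwMat {N : ℕ} (W : Matrix (Fin N) (Fin N) ℝ) : Matrix (Fin N) (Fin N) ℝ :=
  Matrix.diagonal (fun i => (deg W i)⁻¹) * W

/-- The 0/1 partition matrix `P` of the partition encoded by `f` (node `i` lies in part `f i`). -/
def partMat {N n : ℕ} (f : Fin N → Fin n) : Matrix (Fin n) (Fin N) ℝ :=
  fun p i => if f i = p then 1 else 0

/-- Size `|S_p|` of the part `p`. -/
def partSize {N n : ℕ} (f : Fin N → Fin n) (p : Fin n) : ℕ :=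
  (Finset.univ.filter fun i => f i = p).card

/-- Coarse adjacency matrix `W_c = P W Pᵀ`. -/
def coarse {N n : ℕ} (f : Fin N → Fin n) (W : Matrix (Fin N) (Fin N) ℝ) :
    Matrix (Fin n) (Fin n) ℝ :=
  partMat f * W * (partMat f)ᵀ

/-- Lifted adjacency matrix `W_l(i,j) = W_c(f i, f j) / (|S_{f i}|·|S_{f j}|)`. -/
def liftG {N n : ℕ} (f : Fin N → Fin n) (W : Matrix (Fin N) (Fin N) ℝ) :
    Matrix (Fin N) (Fin N) ℝ :=
  fun i j => coarse f W (f i) (f j) / ((partSize f (f i) : ℝ) * (partSize f (f j) : ℝ))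

/-- Normalized coarsening matrix `C` with `C(p,i) = 1/√|S_p|` iff `i ∈ S_p`. -/
def coarsenMat {N n : ℕ} (f : Fin N → Fin n) : Matrix (Fin n) (Fin N) ℝ :=
  fun p i => if f i = p then (Real.sqrt (partSize f p : ℝ))⁻¹ else 0

/-- Pseudo-inverse `P⁺` of the partition matrix, `P⁺(i,p) = 1/|S_p|` iff `i ∈ S_p`. -/
def pinvMat {N n : ℕ} (f : Fin N → Fin n) : Matrix (Fin N) (Fin n) ℝ :=
  fun i p => if f i = p then ((partSize f p : ℝ))⁻¹ else 0

/-- `μ` lists the eigenvalues of `A` in nondecreasing order (with multiplicity):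
`μ` is monotone and the characteristic polynomial of `A` splits as `∏ (X - μ i)`. -/
def sortedEigs {m : ℕ} (A : Matrix (Fin m) (Fin m) ℝ) (μ : Fin m → ℝ) : Prop :=
  Monotone μ ∧ A.charpoly = ∏ i, (Polynomial.X - Polynomial.C (μ i))

/-- Squared Frobenius norm of a matrix. -/
def frobSq {a b : ℕ} (M : Matrix (Fin a) (Fin b) ℝ) : ℝ := ∑ i, ∑ j, (M i j) ^ 2

/-- Partial spectral distance between sorted spectra `μ` (original, size `N`) and
`μc` (coarse, size `n`): `∑_{i=1}^k |μ(i) - μc(i)| + ∑_{i=k+1}^n |μc(i) - μ(i+N-n)|`,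
where `k` is the largest index with `μc k < 1` (for monotone `μc`). -/
def SDpart {N n : ℕ} (h : n ≤ N) (μ : Fin N → ℝ) (μc : Fin n → ℝ) : ℝ :=
  ∑ i : Fin n,
    if μc i < 1 then |μ (Fin.castLE h i) - μc i|
    else |μc i - μ ⟨i.1 + N - n, by have := i.2; omega⟩|

/-!
With `C = D_c^{-1/2} P D^{1/2}` one has `P D Pᵀ = D_c`, hence `C Cᵀ = 1`, and
`C D^{-1/2} = D_c^{-1/2} P`, hence `C L Cᵀ = L_c`: the coarse Laplacian is a compression of `L`
to an `n`-dimensional subspace, and the claim is Cauchy's interlacing theorem.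

For the latter, diagonalize `L = Q diag(λ) Qᵀ` and `L_c = R diag(λ_c) Rᵀ`; then `M = Qᵀ Cᵀ R`
satisfies `Mᵀ M = 1` and `Mᵀ diag(λ) M = diag(λ_c)`. A dimension count gives a nonzero `y`
supported on the first `i` coordinates with `M y` vanishing on the first `i - 1`, and comparing
the Rayleigh quotients of `y` and `M y` yields `λ(i) ≤ λ_c(i)`. The upper bound is the same
argument for `-λ` and `-λ_c`.
-/

open Finset

section Compression

variable {ι κ : Type*} [Fintype ι] [Fintype κ]

lemma exists_ne_zero_supported_mulVec_eq_zero (M : Matrix ι κ ℝ) {s : Finset κ} {t : Finset ι}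
    (hts : #t < #s) :
    ∃ y : κ → ℝ, y ≠ 0 ∧ (∀ p ∉ s, y p = 0) ∧ ∀ j ∈ t, (M *ᵥ y) j = 0 := by
  classical
  let K : Matrix t s ℝ := M.submatrix (↑) (↑)
  obtain ⟨z, hzK, hz⟩ := Submodule.exists_mem_ne_zero_of_ne_bot <|
    LinearMap.ker_ne_bot_of_finrank_lt (f := K.mulVecLin) (by simpa using hts)
  let y : κ → ℝ := fun p => if hp : p ∈ s then z ⟨p, hp⟩ else 0
  have hy_sum (j : ι) : (M *ᵥ y) j = ∑ p : s, M j p * z p := by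
    simp only [mulVec, dotProduct, y, mul_dite, mul_zero]
    rw [← sum_subset (subset_univ s) (fun p _ hp => dif_neg hp), ← sum_attach]
    refine sum_congr ?_ fun p _ => dif_pos p.2
    ext; simp
  refine ⟨y, fun hy => hz (funext fun p => by simpa [y] using congrFun hy p),
    fun p hp => dif_neg hp, fun j hj => ?_⟩
  rw [hy_sum]
  exact congrFun (LinearMap.mem_ker.1 hzK) ⟨j, hj⟩

lemma dotProduct_mulVec_mulVec_eq (M : Matrix ι κ ℝ) (A : Matrix ι ι ℝ) (y : κ → ℝ) :
    (M *ᵥ y) ⬝ᵥ (A *ᵥ (M *ᵥ y)) = y ⬝ᵥ ((Mᵀ * A * M) *ᵥ y) := by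
  rw [← mulVec_mulVec, ← mulVec_mulVec, dotProduct_mulVec y, vecMul_transpose]

lemma mul_dotProduct_self_le_diagonal [DecidableEq ι] {μ x : ι → ℝ} {a : ℝ}
    (h : ∀ j, x j ≠ 0 → a ≤ μ j) :
    a * (x ⬝ᵥ x) ≤ x ⬝ᵥ (diagonal μ *ᵥ x) := by
  simp only [dotProduct, mulVec_diagonal, mul_sum]
  refine sum_le_sum fun j _ => ?_
  by_cases hj : x j = 0
  · simp [hj]
  · nlinarith [h j hj, mul_self_nonneg (x j)]

lemma le_of_transpose_mul_diagonal_mul_eq [DecidableEq ι] [DecidableEq κ] {M : Matrix ι κ ℝ}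
    {μ : ι → ℝ} {ν : κ → ℝ} (hM : Mᵀ * M = 1) (hMμ : Mᵀ * diagonal μ * M = diagonal ν)
    {y : κ → ℝ} (hy : y ≠ 0) {a b : ℝ} (ha : ∀ j, (M *ᵥ y) j ≠ 0 → a ≤ μ j)
    (hb : ∀ p, y p ≠ 0 → ν p ≤ b) : a ≤ b := by
  have hnorm : (M *ᵥ y) ⬝ᵥ (M *ᵥ y) = y ⬝ᵥ y := by
    simpa [hM] using dotProduct_mulVec_mulVec_eq M 1 y
  have hpos : 0 < y ⬝ᵥ y := by
    obtain ⟨p, hp⟩ := Function.ne_iff.1 hy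
    exact sum_pos' (fun p _ => mul_self_nonneg (y p)) ⟨p, mem_univ p, by simpa using hp⟩
  have hb' : y ⬝ᵥ (diagonal ν *ᵥ y) ≤ b * (y ⬝ᵥ y) := by
    have := mul_dotProduct_self_le_diagonal (μ := -ν) (a := -b) (x := y)
      fun p hp => neg_le_neg (hb p hp)
    rw [show diagonal (-ν) = -diagonal ν by simp, neg_mulVec, dotProduct_neg, neg_mul] at this
    linarith
  refine le_of_mul_le_mul_right ?_ hpos
  calc a * (y ⬝ᵥ y) = a * ((M *ᵥ y) ⬝ᵥ (M *ᵥ y)) := by rw [hnorm]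
    _ ≤ (M *ᵥ y) ⬝ᵥ (diagonal μ *ᵥ (M *ᵥ y)) := mul_dotProduct_self_le_diagonal ha
    _ = y ⬝ᵥ (diagonal ν *ᵥ y) := by rw [dotProduct_mulVec_mulVec_eq, hMμ]
    _ ≤ b * (y ⬝ᵥ y) := hb'

end Compression

lemma interlace_of_transpose_mul_diagonal_mul_eq {N n : ℕ} (hnN : n ≤ N)
    {M : Matrix (Fin N) (Fin n) ℝ} {μ : Fin N → ℝ} {ν : Fin n → ℝ} (hμ : Monotone μ)
    (hν : Monotone ν) (hM : Mᵀ * M = 1) (hMμ : Mᵀ * diagonal μ * M = diagonal ν) (i : Fin n) :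
    μ (Fin.castLE hnN i) ≤ ν i ∧ ν i ≤ μ ⟨i.1 + N - n, by have := i.2; omega⟩ := by
  constructor
  · obtain ⟨y, hy, hys, hyt⟩ := exists_ne_zero_supported_mulVec_eq_zero M
      (s := Iic i) (t := Iio (Fin.castLE hnN i)) (by simp)
    refine le_of_transpose_mul_diagonal_mul_eq hM hMμ hy (fun j hj => hμ ?_) (fun p hp => hν ?_)
    · exact not_lt.1 fun h => hj (hyt j (mem_Iio.2 h))
    · exact not_lt.1 fun h => hp (hys p (by simpa using h))
  · set k : Fin N := ⟨i.1 + N - n, by have := i.2; omega⟩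
    have hMμ' : Mᵀ * diagonal (-μ) * M = diagonal (-ν) := by
      rw [show diagonal (-μ) = -diagonal μ by simp, Matrix.mul_neg, Matrix.neg_mul, hMμ]
      simp
    obtain ⟨y, hy, hys, hyt⟩ := exists_ne_zero_supported_mulVec_eq_zero M
      (s := Ici i) (t := Ioi k) (by simp only [Fin.card_Ici, Fin.card_Ioi, k]; omega)
    refine neg_le_neg_iff.1 <| le_of_transpose_mul_diagonal_mul_eq hM hMμ' hy
      (fun j hj => neg_le_neg (hμ ?_)) (fun p hp => neg_le_neg (hν ?_))
    · exact not_lt.1 fun h => hj (hyt j (mem_Ioi.2 h))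
    · exact not_lt.1 fun h => hp (hys p (by simpa using h))

lemma Monotone.eq_comp_sort_of_map_univ_eq {α : Type*} [LinearOrder α] {m : ℕ}
    {μ ν : Fin m → α} (hμ : Monotone μ) (h : univ.val.map μ = univ.val.map ν) :
    μ = ν ∘ Tuple.sort ν := by
  have hperm : (List.ofFn μ).Perm (List.ofFn (ν ∘ Tuple.sort ν)) := by
    refine (Multiset.coe_eq_coe.1 ?_).trans ((Tuple.sort ν).ofFn_comp_perm ν).symm
    rw [← Fin.univ_val_map, ← Fin.univ_val_map, h]
  exact List.ofFn_injective <|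
    hperm.eq_of_sortedLE hμ.sortedLE_ofFn (Tuple.monotone_sort ν).sortedLE_ofFn

lemma sortedEigs.eq_eigenvalues_comp_sort {m : ℕ} {A : Matrix (Fin m) (Fin m) ℝ}
    (hA : A.IsHermitian) {μ : Fin m → ℝ} (h : sortedEigs A μ) :
    μ = hA.eigenvalues ∘ Tuple.sort hA.eigenvalues := by
  refine h.1.eq_comp_sort_of_map_univ_eq ?_
  have hroots := hA.roots_charpoly_eq_eigenvalues
  rw [h.2, Polynomial.roots_prod _ _ (by simp [prod_ne_zero_iff, Polynomial.X_sub_C_ne_zero])]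
    at hroots
  simpa using hroots

lemma sortedEigs.exists_orthogonal_conj_eq_diagonal {m : ℕ} {A : Matrix (Fin m) (Fin m) ℝ}
    (hA : A.IsHermitian) {μ : Fin m → ℝ} (h : sortedEigs A μ) :
    ∃ Q : Matrix (Fin m) (Fin m) ℝ, Qᵀ * Q = 1 ∧ Qᵀ * A * Q = diagonal μ := by
  let Q₀ : Matrix (Fin m) (Fin m) ℝ := hA.eigenvectorUnitary
  have hQ₀ : Q₀ᵀ * Q₀ = 1 := by
    simpa [Q₀, star_eq_conjTranspose] using (hA.eigenvectorUnitary).2.1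
  have hQ₀A : Q₀ᵀ * A * Q₀ = diagonal hA.eigenvalues := by
    simpa [Q₀, Unitary.conjStarAlgAut_apply, star_eq_conjTranspose] using
      hA.conjStarAlgAut_star_eigenvectorUnitary
  let σ := Tuple.sort hA.eigenvalues
  refine ⟨Q₀.submatrix id σ, ?_, ?_⟩
  · rw [transpose_submatrix, ← submatrix_mul _ _ _ _ _ Function.bijective_id, hQ₀,
      submatrix_one_equiv]
  · rw [transpose_submatrix, ← submatrix_id_id A,
      ← submatrix_mul _ _ _ _ _ Function.bijective_id,
      ← submatrix_mul _ _ _ _ _ Function.bijective_id, hQ₀A, submatrix_diagonal_equiv,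
      h.eq_eigenvalues_comp_sort hA]

theorem sortedEigs.interlace_mul_mul_transpose {N n : ℕ} (hnN : n ≤ N)
    {A : Matrix (Fin N) (Fin N) ℝ} (hA : A.IsHermitian) {C : Matrix (Fin n) (Fin N) ℝ}
    (hC : C * Cᵀ = 1) {μ : Fin N → ℝ} {ν : Fin n → ℝ} (hμ : sortedEigs A μ)
    (hν : sortedEigs (C * A * Cᵀ) ν) (i : Fin n) :
    μ (Fin.castLE hnN i) ≤ ν i ∧ ν i ≤ μ ⟨i.1 + N - n, by have := i.2; omega⟩ := by
  have hCAC : (C * A * Cᵀ).IsHermitian := by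
    simpa using isHermitian_mul_mul_conjTranspose C hA
  obtain ⟨Q, hQ, hQA⟩ := hμ.exists_orthogonal_conj_eq_diagonal hA
  obtain ⟨R, hR, hRB⟩ := hν.exists_orthogonal_conj_eq_diagonal hCAC
  have hQQ : Q * Qᵀ = 1 := mul_eq_one_comm.1 hQ
  have hA_eq : Q * diagonal μ * Qᵀ = A := by
    rw [← hQA, ← Matrix.mul_assoc, ← Matrix.mul_assoc, hQQ, Matrix.one_mul, Matrix.mul_assoc,
      hQQ, Matrix.mul_one]
  refine interlace_of_transpose_mul_diagonal_mul_eq hnN (M := Qᵀ * Cᵀ * R) hμ.1 hν.1 ?_ ?_ i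
  · calc (Qᵀ * Cᵀ * R)ᵀ * (Qᵀ * Cᵀ * R) = Rᵀ * C * (Q * Qᵀ) * Cᵀ * R := by
          simp [Matrix.mul_assoc]
      _ = 1 := by rw [hQQ, Matrix.mul_one, Matrix.mul_assoc Rᵀ, hC, Matrix.mul_one, hR]
  · calc (Qᵀ * Cᵀ * R)ᵀ * diagonal μ * (Qᵀ * Cᵀ * R)
          = Rᵀ * (C * (Q * diagonal μ * Qᵀ) * Cᵀ) * R := by simp [Matrix.mul_assoc]
      _ = diagonal ν := by rw [hA_eq, hRB]

section Coarsening

variable {N n : ℕ} (f : Fin N → Fin n) (W : Matrix (Fin N) (Fin N) ℝ)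

def sqrtDeg : Matrix (Fin N) (Fin N) ℝ := diagonal fun i => √(deg W i)

def degCoarsenMat : Matrix (Fin n) (Fin N) ℝ :=
  invSqrtDeg (coarse f W) * partMat f * sqrtDeg W

lemma partMat_mul_diagonal_mul_transpose (d : Fin N → ℝ) :
    partMat f * diagonal d * (partMat f)ᵀ = diagonal fun p => ∑ i with f i = p, d i := by
  ext p q
  rw [mul_apply, diagonal_apply, sum_filter]
  simp only [mul_diagonal, transpose_apply, partMat]
  by_cases hpq : p = q
  · subst hpq
    rw [if_pos rfl]
    refine sum_congr rfl fun i _ => ?_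
    split_ifs <;> simp
  · simp only [hpq, if_false]
    refine sum_eq_zero fun i _ => ?_
    by_cases hp : f i = p
    · simp [hp, hpq]
    · simp [hp]

lemma deg_eq_mulVec_one : deg W = W *ᵥ 1 := by
  ext i
  simp [deg, mulVec, dotProduct]

lemma deg_coarse (p : Fin n) : deg (coarse f W) p = ∑ i with f i = p, deg W i := by
  have hP : (partMat f)ᵀ *ᵥ 1 = 1 := by
    ext i
    simp [mulVec, dotProduct, partMat]
  rw [deg_eq_mulVec_one, coarse, ← mulVec_mulVec, hP, ← mulVec_mulVec, ← deg_eq_mulVec_one]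
  simp [mulVec, dotProduct, partMat, sum_filter]

lemma deg_coarse_pos (hdeg : ∀ i, 0 < deg W i) (hf : Function.Surjective f) (p : Fin n) :
    0 < deg (coarse f W) p := by
  obtain ⟨i, rfl⟩ := hf p
  rw [deg_coarse]
  exact sum_pos (fun j _ => hdeg j) ⟨i, by simp⟩

variable {W}

@[simp]
lemma invSqrtDeg_transpose : (invSqrtDeg W)ᵀ = invSqrtDeg W := diagonal_transpose _

@[simp]
lemma sqrtDeg_transpose : (sqrtDeg W)ᵀ = sqrtDeg W := diagonal_transpose _

lemma normLap_isHermitian (hW : W.IsSymm) : (normLap W).IsHermitian := by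
  rw [IsHermitian, conjTranspose_eq_transpose_of_trivial, normLap, transpose_sub, transpose_one,
    transpose_mul, transpose_mul, invSqrtDeg_transpose, hW.eq, Matrix.mul_assoc]

lemma sqrtDeg_mul_sqrtDeg (hdeg : ∀ i, 0 ≤ deg W i) :
    sqrtDeg W * sqrtDeg W = diagonal (deg W) := by
  simp [sqrtDeg, diagonal_mul_diagonal, Real.mul_self_sqrt (hdeg _)]

lemma sqrtDeg_mul_invSqrtDeg (hdeg : ∀ i, 0 < deg W i) : sqrtDeg W * invSqrtDeg W = 1 := by
  simp [sqrtDeg, invSqrtDeg, diagonal_mul_diagonal, (Real.sqrt_pos.2 (hdeg _)).ne']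

lemma invSqrtDeg_mul_diagonal_deg_mul_invSqrtDeg (hdeg : ∀ i, 0 < deg W i) :
    invSqrtDeg W * diagonal (deg W) * invSqrtDeg W = 1 := by
  rw [invSqrtDeg, diagonal_mul_diagonal, diagonal_mul_diagonal, ← diagonal_one]
  congr 1
  ext i
  rw [mul_right_comm, ← sq, inv_pow, Real.sq_sqrt (hdeg i).le, inv_mul_cancel₀ (hdeg i).ne']


lemma partMat_mul_diagonal_deg_mul_transpose :
    partMat f * diagonal (deg W) * (partMat f)ᵀ = diagonal (deg (coarse f W)) := by
  rw [partMat_mul_diagonal_mul_transpose]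
  exact congrArg diagonal (funext fun p => (deg_coarse f W p).symm)

lemma degCoarsenMat_mul_transpose (hdeg : ∀ i, 0 < deg W i) (hf : Function.Surjective f) :
    degCoarsenMat f W * (degCoarsenMat f W)ᵀ = 1 := by
  calc degCoarsenMat f W * (degCoarsenMat f W)ᵀ
      = invSqrtDeg (coarse f W) * (partMat f * (sqrtDeg W * sqrtDeg W) * (partMat f)ᵀ) *
          invSqrtDeg (coarse f W) := by
        simp only [degCoarsenMat, transpose_mul, sqrtDeg_transpose, invSqrtDeg_transpose,
          Matrix.mul_assoc]
    _ = 1 := by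
        rw [sqrtDeg_mul_sqrtDeg fun i => (hdeg i).le, partMat_mul_diagonal_deg_mul_transpose,
          invSqrtDeg_mul_diagonal_deg_mul_invSqrtDeg (deg_coarse_pos f W hdeg hf)]

lemma degCoarsenMat_mul_normLap_mul_transpose (hdeg : ∀ i, 0 < deg W i)
    (hf : Function.Surjective f) :
    degCoarsenMat f W * normLap W * (degCoarsenMat f W)ᵀ = normLap (coarse f W) := by
  have hC : degCoarsenMat f W * invSqrtDeg W = invSqrtDeg (coarse f W) * partMat f := by
    rw [degCoarsenMat, Matrix.mul_assoc, sqrtDeg_mul_invSqrtDeg hdeg, Matrix.mul_one]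
  have hCt : invSqrtDeg W * (degCoarsenMat f W)ᵀ = (partMat f)ᵀ * invSqrtDeg (coarse f W) := by
    simpa using congrArg transpose hC
  rw [normLap, normLap, Matrix.mul_sub, Matrix.sub_mul, Matrix.mul_one,
    degCoarsenMat_mul_transpose f hdeg hf]
  congr 1
  calc degCoarsenMat f W * (invSqrtDeg W * W * invSqrtDeg W) * (degCoarsenMat f W)ᵀ
      = (degCoarsenMat f W * invSqrtDeg W) * W * (invSqrtDeg W * (degCoarsenMat f W)ᵀ) := by
        simp only [Matrix.mul_assoc]
    _ = _ := by rw [hC, hCt]; simp only [coarse, Matrix.mul_assoc]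

end Coarsening

/-- **Eigenvalue interlacing under coarsening.**
If `W` is a weighted graph on `N` nodes coarsened with respect to a surjective partition
map `f : Fin N → Fin n`, then the sorted normalized-Laplacian eigenvalues satisfy
`λ(i) ≤ λ_c(i) ≤ λ(i + N - n)` for every `i`. -/
theorem interlacing {N n : ℕ} (hnN : n ≤ N) (W : Matrix (Fin N) (Fin N) ℝ)
    (hsymm : W.IsSymm) (hdeg : ∀ i, 0 < deg W i)
    (f : Fin N → Fin n) (hsurj : Function.Surjective f)
    (μ : Fin N → ℝ) (μc : Fin n → ℝ)
    (hμ : sortedEigs (normLap W) μ)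
    (hμc : sortedEigs (normLap (coarse f W)) μc) :
    ∀ i : Fin n,
      μ (Fin.castLE hnN i) ≤ μc i ∧
      μc i ≤ μ ⟨i.1 + N - n, by have := i.2; omega⟩ := by
  rw [← degCoarsenMat_mul_normLap_mul_transpose f hdeg hsurj] at hμc
  exact hμ.interlace_mul_mul_transpose hnN (normLap_isHermitian hsymm)
    (degCoarsenMat_mul_transpose f hdeg hsurj) hμc
end
end

section
/- Let W ∈ ℝ^{N×N} be a symmetric matrix with nonnegative entries and positive degrees, let W_c = P W Pᵀ be its coarse graph with respect to a partition into n nonempty parts with normalized Laplacian L_c, and let W_l be the lifted graph with normalized Laplacian L_l. Then the characteristic polynomial of L_l equals (x − 1)^{N−n} times the characteristic polynomial of L_c; in particular, the multiset of eigenvalues of L_l consists of all n eigenvalues of L_c together with the eigenvalue 1 repeated N − n times. -/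
/-!
Let `C` be the `n × N` matrix with `C(p,i) = |S_p|^{-1/2}` for `i ∈ S_p`, so that `C Cᵀ = I_n`.
Every lifted degree is a coarse degree divided by the size of its part, and this exactly
turns the normalized adjacency matrix of the lifted graph into `Cᵀ A_c C`, where
`A_c = D_c^{-1/2} W_c D_c^{-1/2}`. Hence `L_l = I_N - Cᵀ A_c C`, and the identity
`X^n χ(Cᵀ M) = X^N χ(M Cᵀ)` (`Matrix.charpoly_mul_comm'`), shifted by `1`, gives
`χ(L_l) = (X - 1)^{N-n} χ(I_n - A_c)`.
-/

open Matrix BigOperators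

noncomputable section

namespace Matrix

open Polynomial

variable {R : Type*} [CommRing R] {m n : Type*} [Fintype m] [Fintype n] [DecidableEq m]
  [DecidableEq n]

theorem charpoly_one_sub (M : Matrix n n R) :
    (1 - M).charpoly = (-M).charpoly.comp (X - C 1) := by
  simpa [sub_eq_add_neg, add_comm] using charpoly_sub_scalar (-M) (-1)

theorem charpoly_one_sub_mul_mul' {Q : Matrix m n R} {P : Matrix n m R} (hQP : Q * P = 1)
    (B : Matrix m m R) :
    (X - C 1) ^ Fintype.card m * (1 - P * B * Q).charpoly =
      (X - C 1) ^ Fintype.card n * (1 - B).charpoly := by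
  have h := congrArg (·.comp (X - C (1 : R))) (charpoly_mul_comm' P (-(B * Q)))
  simp only [mul_comp, X_pow_comp] at h
  rwa [Matrix.neg_mul, Matrix.mul_assoc, hQP, Matrix.mul_one, Matrix.mul_neg,
    ← Matrix.mul_assoc, ← charpoly_one_sub, ← charpoly_one_sub] at h

theorem charpoly_one_sub_mul_mul [Nontrivial R] {Q : Matrix m n R} {P : Matrix n m R}
    (hQP : Q * P = 1) (B : Matrix m m R) (hle : Fintype.card m ≤ Fintype.card n) :
    (1 - P * B * Q).charpoly =
      (X - C 1) ^ (Fintype.card n - Fintype.card m) * (1 - B).charpoly := by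
  rw [← (((monic_X_sub_C (1 : R)).pow (Fintype.card m)).isRegular).left.eq_iff, ← mul_assoc,
    ← pow_add, Nat.add_sub_cancel' hle, charpoly_one_sub_mul_mul' hQP]

end Matrix

theorem invSqrtDeg_mul_mul_invSqrtDeg_apply {N : ℕ} (W : Matrix (Fin N) (Fin N) ℝ)
    (i j : Fin N) :
    (invSqrtDeg W * W * invSqrtDeg W) i j = (√(deg W i))⁻¹ * W i j * (√(deg W j))⁻¹ := by
  simp [invSqrtDeg, mul_diagonal, diagonal_mul]

section Lift

variable {N n : ℕ} {f : Fin N → Fin n}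

theorem partSize_pos (hf : Function.Surjective f) (p : Fin n) : 0 < partSize f p := by
  obtain ⟨i, rfl⟩ := hf p
  exact Finset.card_pos.2 ⟨i, by simp⟩

theorem coarsenMat_mul_transpose (hf : Function.Surjective f) :
    coarsenMat f * (coarsenMat f)ᵀ = 1 := by
  ext p q
  have hp : (0 : ℝ) < partSize f p := mod_cast partSize_pos hf p
  by_cases hpq : p = q
  · subst hpq
    simp only [mul_apply, transpose_apply, coarsenMat, ite_zero_mul_ite_zero, and_self,
      one_apply_eq]
    rw [← Finset.sum_filter, Finset.sum_const, nsmul_eq_mul, ← mul_inv,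
      Real.mul_self_sqrt hp.le]
    exact mul_inv_cancel₀ hp.ne'
  · simp only [mul_apply, transpose_apply, coarsenMat, one_apply_ne hpq]
    refine Finset.sum_eq_zero fun i _ => ?_
    split_ifs <;> simp_all

theorem transpose_coarsenMat_mul_mul_coarsenMat_apply (A : Matrix (Fin n) (Fin n) ℝ)
    (i j : Fin N) :
    ((coarsenMat f)ᵀ * A * coarsenMat f) i j =
      (√(partSize f (f i)))⁻¹ * A (f i) (f j) * (√(partSize f (f j)))⁻¹ := by
  simp [mul_apply, coarsenMat, ite_mul, mul_ite, Finset.sum_ite_eq]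

theorem deg_liftG (hf : Function.Surjective f) (W : Matrix (Fin N) (Fin N) ℝ) (i : Fin N) :
    deg (liftG f W) i = deg (coarse f W) (f i) / partSize f (f i) := by
  rw [deg, ← Finset.sum_fiberwise Finset.univ f, deg, Finset.sum_div]
  refine Finset.sum_congr rfl fun q _ => ?_
  have hq : (partSize f q : ℝ) ≠ 0 := mod_cast (partSize_pos hf q).ne'
  rw [Finset.sum_congr rfl fun j hj => by rw [liftG, (Finset.mem_filter.1 hj).2],
    Finset.sum_const, nsmul_eq_mul]
  change (partSize f q : ℝ) * _ = _
  field_simp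

theorem invSqrtDeg_mul_liftG_mul_invSqrtDeg (hf : Function.Surjective f)
    (W : Matrix (Fin N) (Fin N) ℝ) :
    invSqrtDeg (liftG f W) * liftG f W * invSqrtDeg (liftG f W) =
      (coarsenMat f)ᵀ * (invSqrtDeg (coarse f W) * coarse f W * invSqrtDeg (coarse f W)) *
        coarsenMat f := by
  ext i j
  have hs : ∀ p, (0 : ℝ) < partSize f p := fun p => mod_cast partSize_pos hf p
  have hs_sq : (partSize f (f i) : ℝ) * partSize f (f j) =
      √(partSize f (f i)) * √(partSize f (f i)) *
        (√(partSize f (f j)) * √(partSize f (f j))) := by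
    rw [Real.mul_self_sqrt (hs _).le, Real.mul_self_sqrt (hs _).le]
  have hi : √(partSize f (f i) : ℝ) ≠ 0 := (Real.sqrt_pos.2 (hs _)).ne'
  have hj : √(partSize f (f j) : ℝ) ≠ 0 := (Real.sqrt_pos.2 (hs _)).ne'
  rw [invSqrtDeg_mul_mul_invSqrtDeg_apply, transpose_coarsenMat_mul_mul_coarsenMat_apply,
    invSqrtDeg_mul_mul_invSqrtDeg_apply, deg_liftG hf, deg_liftG hf,
    Real.sqrt_div' _ (hs _).le, Real.sqrt_div' _ (hs _).le, liftG, hs_sq]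
  field_simp

end Lift

theorem lifted_charpoly_general {N n : ℕ} (W : Matrix (Fin N) (Fin N) ℝ)
    (f : Fin N → Fin n) (hsurj : Function.Surjective f) :
    (normLap (liftG f W)).charpoly =
        (Polynomial.X - Polynomial.C 1) ^ (N - n) * (normLap (coarse f W)).charpoly ∧
    (normLap (liftG f W)).charpoly.roots =
        Multiset.replicate (N - n) (1 : ℝ) + (normLap (coarse f W)).charpoly.roots := by
  have hcard : Fintype.card (Fin n) ≤ Fintype.card (Fin N) :=
    Fintype.card_le_of_surjective f hsurj
  have hcharpoly : (normLap (liftG f W)).charpoly =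
      (Polynomial.X - Polynomial.C 1) ^ (N - n) * (normLap (coarse f W)).charpoly := by
    rw [normLap, invSqrtDeg_mul_liftG_mul_invSqrtDeg hsurj,
      charpoly_one_sub_mul_mul (coarsenMat_mul_transpose hsurj) _ hcard, normLap,
      Fintype.card_fin, Fintype.card_fin]
  refine ⟨hcharpoly, ?_⟩
  rw [hcharpoly, Polynomial.roots_mul, Polynomial.roots_pow, Polynomial.roots_X_sub_C,
    Multiset.nsmul_singleton]
  exact mul_ne_zero (pow_ne_zero _ (Polynomial.X_sub_C_ne_zero 1)) (charpoly_monic _).ne_zero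

/-- **Eigenvalue preservation under lifting.**
The characteristic polynomial of the normalized Laplacian of the lifted graph equals
`(X - 1)^(N - n)` times that of the coarse graph; in particular the multiset of
eigenvalues of `L_l` consists of those of `L_c` plus the eigenvalue `1` with
multiplicity `N - n`. -/
theorem lifted_charpoly {N n : ℕ} (W : Matrix (Fin N) (Fin N) ℝ)
    (hsymm : W.IsSymm) (hnonneg : ∀ i j, 0 ≤ W i j) (hdeg : ∀ i, 0 < deg W i)
    (f : Fin N → Fin n) (hsurj : Function.Surjective f) :
    (normLap (liftG f W)).charpoly =
        (Polynomial.X - Polynomial.C 1) ^ (N - n) * (normLap (coarse f W)).charpoly ∧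
    (normLap (liftG f W)).charpoly.roots =
        Multiset.replicate (N - n) (1 : ℝ) + (normLap (coarse f W)).charpoly.roots :=
  lifted_charpoly_general W f hsurj
end
end

section
/- Let C ∈ ℝ^{n×N} satisfy C Cᵀ = I_n, let U_k ∈ ℝ^{N×k} have orthonormal columns with k ≤ n, and set Π = CᵀC and δ = ‖(I_N − Π) U_k‖_F². Let Z = C U_k ∈ ℝ^{n×k}. Then the smallest eigenvalue of Zᵀ Z is at least 1 − δ; in particular, if δ < 1 then Zᵀ Z is invertible and ‖(Zᵀ Z)^{-1}‖₂ ≤ 1/(1 − δ). -/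
/-!
Since `C Cᵀ = I`, `Π = CᵀC` is an orthogonal projection, so with `M = (I - Π) U` the Gram matrix
`ZᵀZ = UᵀΠU` equals `I - MᵀM`. Row-wise Cauchy–Schwarz gives `‖M w‖² ≤ ‖M‖_F² ‖w‖² = δ ‖w‖²`, so
the quadratic form of `ZᵀZ` is bounded below by `(1 - δ) ‖w‖²`. Such a lower bound `c` bounds every
eigenvalue from below, and for `c > 0` it forces invertibility and `c ‖A⁻¹x‖² ≤ ⟪A⁻¹x, x⟫ ≤ ‖A⁻¹x‖ ‖x‖`.
-/

open Matrix BigOperators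

noncomputable section

theorem dotProduct_transpose_mul_self_mulVec_le_frobSq {a b : ℕ} (M : Matrix (Fin a) (Fin b) ℝ)
    (w : Fin b → ℝ) : w ⬝ᵥ (Mᵀ * M) *ᵥ w ≤ frobSq M * ∑ j, w j ^ 2 := by
  have hquad : w ⬝ᵥ (Mᵀ * M) *ᵥ w = ∑ i, (M *ᵥ w) i ^ 2 := by
    rw [← mulVec_mulVec, dotProduct_mulVec, vecMul_transpose]
    simp only [dotProduct, sq]
  rw [hquad, frobSq, Finset.sum_mul]
  exact Finset.sum_le_sum fun i _ => Finset.sum_mul_sq_le_sq_mul_sq Finset.univ (M i) w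

namespace Matrix

theorem gram_mul_eq_one_sub_gram_complement {m n k R : Type*} [Fintype m] [Fintype n]
    [DecidableEq m] [DecidableEq n] [DecidableEq k] [CommRing R]
    {C : Matrix m n R} (hC : C * Cᵀ = 1) {U : Matrix n k R} (hU : Uᵀ * U = 1) :
    (C * U)ᵀ * (C * U) = 1 - ((1 - Cᵀ * C) * U)ᵀ * ((1 - Cᵀ * C) * U) := by
  have hproj : Cᵀ * C * (Cᵀ * C) = Cᵀ * C := by
    rw [Matrix.mul_assoc, ← Matrix.mul_assoc C, hC, Matrix.one_mul]
  have hcompl : (1 - Cᵀ * C)ᵀ * (1 - Cᵀ * C) = 1 - Cᵀ * C := by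
    rw [transpose_sub, transpose_one, transpose_mul, transpose_transpose, Matrix.sub_mul,
      Matrix.one_mul, Matrix.mul_sub, Matrix.mul_one, hproj, sub_self, sub_zero]
  calc (C * U)ᵀ * (C * U) = Uᵀ * U - Uᵀ * (1 - Cᵀ * C) * U := by
        rw [Matrix.mul_sub, Matrix.sub_mul, Matrix.mul_one, transpose_mul, sub_sub_cancel]
        simp only [Matrix.mul_assoc]
    _ = 1 - ((1 - Cᵀ * C) * U)ᵀ * ((1 - Cᵀ * C) * U) := by
        rw [hU, transpose_mul]
        simp only [Matrix.mul_assoc]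
        rw [← Matrix.mul_assoc (1 - Cᵀ * C)ᵀ, hcompl]

variable {ι : Type*} [Fintype ι] {A : Matrix ι ι ℝ} {c : ℝ}

theorem le_of_mulVec_eq_smul_of_coercive
    (hA : ∀ w : ι → ℝ, c * ∑ i, w i ^ 2 ≤ w ⬝ᵥ A *ᵥ w) {σ : ℝ} {v : ι → ℝ} (hv : v ≠ 0)
    (hσ : A *ᵥ v = σ • v) : c ≤ σ := by
  have hsq : ∑ i, v i ^ 2 = v ⬝ᵥ v := by simp only [dotProduct, sq]
  have hpos : 0 < ∑ i, v i ^ 2 := by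
    rw [hsq]
    exact lt_of_le_of_ne (Finset.sum_nonneg fun i _ => mul_self_nonneg (v i))
      (Ne.symm (dotProduct_self_eq_zero.not.mpr hv))
  have := hA v
  rw [hσ, dotProduct_smul, smul_eq_mul, ← hsq] at this
  exact le_of_mul_le_mul_right this hpos

theorem isUnit_of_coercive [DecidableEq ι]
    (hA : ∀ w : ι → ℝ, c * ∑ i, w i ^ 2 ≤ w ⬝ᵥ A *ᵥ w) (hc : 0 < c) : IsUnit A := by
  rw [isUnit_iff_isUnit_det, isUnit_iff_ne_zero]
  intro hdet
  obtain ⟨v, hv, hAv⟩ := exists_mulVec_eq_zero_iff.mpr hdet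
  have := le_of_mulVec_eq_smul_of_coercive hA hv (σ := 0) (by rw [hAv, zero_smul])
  linarith

theorem sqrt_sum_sq_inv_mulVec_le_of_coercive [DecidableEq ι]
    (hA : ∀ w : ι → ℝ, c * ∑ i, w i ^ 2 ≤ w ⬝ᵥ A *ᵥ w) (hc : 0 < c) (x : ι → ℝ) :
    √(∑ i, (A⁻¹ *ᵥ x) i ^ 2) ≤ 1 / c * √(∑ i, x i ^ 2) := by
  set y := A⁻¹ *ᵥ x
  have hAy : A *ᵥ y = x := by
    rw [mulVec_mulVec, mul_nonsing_inv _ ((isUnit_of_coercive hA hc).map detMonoidHom),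
      one_mulVec]
  have hcs : c * √(∑ i, y i ^ 2) ^ 2 ≤ √(∑ i, y i ^ 2) * √(∑ i, x i ^ 2) := by
    rw [Real.sq_sqrt (by positivity)]
    calc c * ∑ i, y i ^ 2 ≤ y ⬝ᵥ x := hAy ▸ hA y
      _ ≤ _ := Real.sum_mul_le_sqrt_mul_sqrt _ y x
  rw [one_div_mul_eq_div, le_div_iff₀ hc]
  rcases (Real.sqrt_nonneg (∑ i, y i ^ 2)).eq_or_lt with hy | hy
  · rw [← hy, zero_mul]; positivity
  · nlinarith

end Matrix

theorem gram_matrix_bound_general {N n k : ℕ}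
    (C : Matrix (Fin n) (Fin N) ℝ) (hC : C * Cᵀ = 1)
    (U : Matrix (Fin N) (Fin k) ℝ) (hU : Uᵀ * U = 1)
    (δ : ℝ) (hδ : δ = frobSq ((1 - Cᵀ * C) * U)) :
    (∀ (σ : ℝ) (v : Fin k → ℝ), v ≠ 0 →
        ((C * U)ᵀ * (C * U)).mulVec v = σ • v → 1 - δ ≤ σ) ∧
    (δ < 1 →
      IsUnit ((C * U)ᵀ * (C * U)) ∧
      ∀ x : Fin k → ℝ,
        Real.sqrt (∑ i, ((((C * U)ᵀ * (C * U))⁻¹).mulVec x i) ^ 2)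
          ≤ (1 / (1 - δ)) * Real.sqrt (∑ i, (x i) ^ 2)) := by
  have hcoercive : ∀ w : Fin k → ℝ,
      (1 - δ) * ∑ i, w i ^ 2 ≤ w ⬝ᵥ ((C * U)ᵀ * (C * U)) *ᵥ w := by
    intro w
    have hM := dotProduct_transpose_mul_self_mulVec_le_frobSq ((1 - Cᵀ * C) * U) w
    have hw : w ⬝ᵥ w = ∑ i, w i ^ 2 := by simp only [dotProduct, sq]
    rw [← hδ] at hM
    rw [gram_mul_eq_one_sub_gram_complement hC hU, sub_mulVec, one_mulVec, dotProduct_sub, hw]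
    linarith
  refine ⟨fun σ v hv hσ => le_of_mulVec_eq_smul_of_coercive hcoercive hv hσ, fun hδ1 => ?_⟩
  have hc : 0 < 1 - δ := sub_pos.mpr hδ1
  exact ⟨isUnit_of_coercive hcoercive hc, sqrt_sum_sq_inv_mulVec_le_of_coercive hcoercive hc⟩

/-- **Lower bound for the Gram matrix `ZᵀZ` with `Z = C U`.**
If `C Cᵀ = I_n`, `U` has orthonormal columns and `δ = ‖(I - CᵀC)U‖_F²`, then every
eigenvalue of `ZᵀZ` is at least `1 - δ`; if moreover `δ < 1`, then `ZᵀZ` is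
invertible with `‖(ZᵀZ)⁻¹‖₂ ≤ 1/(1 - δ)`. -/
theorem gram_matrix_bound {N n k : ℕ} (hk : k ≤ n)
    (C : Matrix (Fin n) (Fin N) ℝ) (hC : C * Cᵀ = 1)
    (U : Matrix (Fin N) (Fin k) ℝ) (hU : Uᵀ * U = 1)
    (δ : ℝ) (hδ : δ = frobSq ((1 - Cᵀ * C) * U)) :
    (∀ (σ : ℝ) (v : Fin k → ℝ), v ≠ 0 →
        ((C * U)ᵀ * (C * U)).mulVec v = σ • v → 1 - δ ≤ σ) ∧
    (δ < 1 →
      IsUnit ((C * U)ᵀ * (C * U)) ∧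
      ∀ x : Fin k → ℝ,
        Real.sqrt (∑ i, ((((C * U)ᵀ * (C * U))⁻¹).mulVec x i) ^ 2)
          ≤ (1 / (1 - δ)) * Real.sqrt (∑ i, (x i) ^ 2)) :=
  gram_matrix_bound_general C hC U hU δ hδ
end
end

section
/- Let A ∈ ℝ^{N×N} be symmetric positive semidefinite with largest eigenvalue at most 2, let C ∈ ℝ^{n×N} satisfy C Cᵀ = I_n, and let k ≤ n. Let U_k ∈ ℝ^{N×k} be a matrix whose columns are orthonormal eigenvectors of A corresponding to its k smallest eigenvalues λ(1) ≤ … ≤ λ(k), and set δ = ‖(I_N − CᵀC) U_k‖_F². If δ < 1, then the k smallest eigenvalues λ_c(1) ≤ … ≤ λ_c(k) of the symmetric matrix C A Cᵀ ∈ ℝ^{n×n} satisfy Σ_{i=1}^k λ_c(i) ≤ (√(Σ_{i=1}^k λ(i)) + √(2δ))² / (1 − δ). -/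
open Matrix BigOperators

noncomputable section

/-! Put `V = U_k`, `F = (1 - CᵀC) V` and `B = C V`. Since `CᵀC` is an orthogonal projection,
`BᵀB = 1 - FᵀF ≥ (1 - δ) • 1`, so `P = B (BᵀB)⁻¹ Bᵀ` is an orthogonal projection of rank `k`
on the coarse space. Ky Fan's principle gives
`∑ λ_c(i) ≤ tr (P C A Cᵀ) = tr ((BᵀB)⁻¹ Bᵀ C A Cᵀ B) ≤ tr ((CᵀC V)ᵀ A (CᵀC V)) / (1 - δ)`.
As `CᵀC V = V - F`, the triangle inequality for the seminorm `X ↦ √tr (Xᵀ A X)` together with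
`A ≤ 2` bounds the numerator by `(√tr (Vᵀ A V) + √(2δ))²`, and `tr (Vᵀ A V) = ∑ λ(i)`. -/

section LoewnerOrder

theorem posDef_of_posSemidef_sub_smul_one {n : Type*} [DecidableEq n] {G : Matrix n n ℝ} {a : ℝ}
    (ha : 0 < a) (hG : (G - a • 1).PosSemidef) : G.PosDef := by
  simpa using PosDef.posSemidef_add hG ((PosDef.one (R := ℝ) (n := n)).smul ha)

variable {m n : Type*} [Fintype m] [Fintype n]

theorem trace_transpose_mul_self (M : Matrix m n ℝ) :
    (Mᵀ * M).trace = ∑ i, ∑ j, M i j ^ 2 := by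
  simp only [trace, diag, mul_apply, transpose_apply, ← sq]
  exact Finset.sum_comm

theorem Matrix.PosSemidef.exists_eq_transpose_mul_self {A : Matrix n n ℝ} (hA : A.PosSemidef) :
    ∃ S : Matrix n n ℝ, A = Sᵀ * S := by
  classical
  open scoped MatrixOrder in
  simpa [star_eq_conjTranspose, conjTranspose_eq_transpose_of_trivial] using
    CStarAlgebra.nonneg_iff_eq_star_mul_self.mp hA.nonneg

theorem IsStarProjection.posSemidef {P : Matrix n n ℝ} (hP : IsStarProjection P) :
    P.PosSemidef := by
  have h : Pᴴ * P = P := by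
    rw [← star_eq_conjTranspose, hP.isSelfAdjoint.star_eq, hP.isIdempotentElem.eq]
  exact h ▸ posSemidef_conjTranspose_mul_self P

theorem trace_mul_mul_transpose_le [DecidableEq n] {X : Matrix n n ℝ} {c : ℝ}
    (hX : (c • 1 - X).PosSemidef) (Z : Matrix m n ℝ) :
    (Z * X * Zᵀ).trace ≤ c * (Z * Zᵀ).trace := by
  have := (hX.mul_mul_conjTranspose_same Z).trace_nonneg
  rw [conjTranspose_eq_transpose_of_trivial, Matrix.mul_sub, Matrix.sub_mul, trace_sub,
    Matrix.mul_smul, Matrix.mul_one, Matrix.smul_mul, trace_smul, smul_eq_mul] at this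
  linarith

theorem Matrix.PosSemidef.trace_mul_le [DecidableEq n] {T X : Matrix n n ℝ} (hT : T.PosSemidef)
    {c : ℝ} (hX : (c • 1 - X).PosSemidef) : (X * T).trace ≤ c * T.trace := by
  obtain ⟨S, rfl⟩ := hT.exists_eq_transpose_mul_self
  calc (X * (Sᵀ * S)).trace = (S * X * Sᵀ).trace := by
        rw [← Matrix.mul_assoc, trace_mul_comm, Matrix.mul_assoc]
    _ ≤ c * (S * Sᵀ).trace := trace_mul_mul_transpose_le hX S
    _ = c * (Sᵀ * S).trace := by rw [trace_mul_comm]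

theorem posSemidef_trace_smul_one_sub_transpose_mul_self [DecidableEq n] (F : Matrix m n ℝ) :
    ((Fᵀ * F).trace • 1 - Fᵀ * F).PosSemidef := by
  refine .of_dotProduct_mulVec_nonneg (by simp [IsHermitian, transpose_sub]) fun x => ?_
  rw [star_trivial, sub_mulVec, dotProduct_sub, smul_mulVec, one_mulVec, dotProduct_smul,
    ← mulVec_mulVec, dotProduct_mulVec, vecMul_transpose, trace_transpose_mul_self, smul_eq_mul,
    sub_nonneg]
  calc (F *ᵥ x) ⬝ᵥ (F *ᵥ x) = ∑ i, (F *ᵥ x) i ^ 2 := by simp [dotProduct, sq]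
    _ ≤ ∑ i, (∑ j, F i j ^ 2) * ∑ j, x j ^ 2 :=
        Finset.sum_le_sum fun i _ => Finset.sum_mul_sq_le_sq_mul_sq _ _ _
    _ = (∑ i, ∑ j, F i j ^ 2) * (x ⬝ᵥ x) := by rw [← Finset.sum_mul]; simp [dotProduct, sq]

theorem posSemidef_inv_smul_one_sub_inv [DecidableEq n] {G : Matrix n n ℝ} {a : ℝ} (ha : 0 < a)
    (hG : (G - a • 1).PosSemidef) : (a⁻¹ • 1 - G⁻¹).PosSemidef := by
  have hGpos := posDef_of_posSemidef_sub_smul_one ha hG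
  have hGG : G * G⁻¹ = 1 := mul_nonsing_inv G ((isUnit_iff_isUnit_det G).mp hGpos.isUnit)
  have hGinvT : (G⁻¹)ᵀ = G⁻¹ := by
    rw [transpose_nonsing_inv, ← conjTranspose_eq_transpose_of_trivial, hGpos.isHermitian.eq]
  have hsum : (1 - a • G⁻¹)ᵀ * (1 - a • G⁻¹) + a • (G⁻¹ * (G - a • 1) * (G⁻¹)ᴴ) =
      a • (a⁻¹ • 1 - G⁻¹) := by
    rw [conjTranspose_eq_transpose_of_trivial, hGinvT]
    simp only [transpose_sub, transpose_smul, transpose_one, hGinvT, Matrix.mul_sub, Matrix.sub_mul,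
      Matrix.mul_smul, Matrix.smul_mul, Matrix.mul_one, Matrix.one_mul, Matrix.mul_assoc, hGG]
    conv_rhs => rw [smul_sub, smul_smul, mul_inv_cancel₀ ha.ne', one_smul]
    module
  have hPSD := ((posSemidef_conjTranspose_mul_self (1 - a • G⁻¹)).add
    ((hG.mul_mul_conjTranspose_same G⁻¹).smul ha.le)).smul (inv_nonneg.mpr ha.le)
  rwa [conjTranspose_eq_transpose_of_trivial (1 - a • G⁻¹), hsum, smul_smul,
    inv_mul_cancel₀ ha.ne', one_smul] at hPSD

theorem posSemidef_smul_one_sub_of_eigenvalue_le [DecidableEq n] {A U : Matrix n n ℝ}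
    {μ : n → ℝ} (hU : Uᵀ * U = 1) (hA : A = U * diagonal μ * Uᵀ) {r : ℝ}
    (hr : ∀ (σ : ℝ) (v : n → ℝ), v ≠ 0 → A *ᵥ v = σ • v → σ ≤ r) :
    (r • 1 - A).PosSemidef := by
  have hμr : ∀ j, μ j ≤ r := fun j => by
    refine hr (μ j) (U *ᵥ Pi.single j 1) (fun h => ?_) ?_
    · have h' := congrArg (Uᵀ *ᵥ ·) h
      simp only [mulVec_mulVec, hU, one_mulVec, mulVec_zero] at h'
      simpa using congrFun h' j
    · rw [hA, mulVec_mulVec, Matrix.mul_assoc, Matrix.mul_assoc, hU, Matrix.mul_one,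
        ← mulVec_mulVec, diagonal_mulVec_single, mul_one,
        show Pi.single j (μ j) = μ j • Pi.single j (1 : ℝ) by
          rw [← Pi.single_smul, smul_eq_mul, mul_one],
        mulVec_smul]
  have hdiag : r • 1 - A = U * diagonal (fun j => r - μ j) * Uᵀ := by
    have hd : diagonal (fun j => r - μ j) = r • 1 - diagonal μ := by
      ext i j
      by_cases hij : i = j <;> simp [hij]
    rw [hA, hd, Matrix.mul_sub, Matrix.sub_mul, Matrix.mul_smul, Matrix.smul_mul, Matrix.mul_one,
      mul_eq_one_comm.mp hU]
  rw [hdiag]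
  simpa [conjTranspose_eq_transpose_of_trivial] using
    (PosSemidef.diagonal fun j => sub_nonneg.mpr (hμr j)).mul_mul_conjTranspose_same U

section Frobenius

attribute [local instance] Matrix.frobeniusNormedAddCommGroup

theorem trace_transpose_mul_self_eq_frobenius_norm_sq (M : Matrix m n ℝ) :
    (Mᵀ * M).trace = ‖M‖ ^ 2 := by
  rw [frobenius_norm_def, ← Real.rpow_natCast, ← Real.rpow_mul (by positivity),
    trace_transpose_mul_self]
  simp

theorem trace_transpose_mul_mul_sub_le {A : Matrix n n ℝ} (hA : A.PosSemidef)
    (X Y : Matrix n m ℝ) :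
    ((X - Y)ᵀ * A * (X - Y)).trace ≤ (√(Xᵀ * A * X).trace + √(Yᵀ * A * Y).trace) ^ 2 := by
  obtain ⟨S, rfl⟩ := hA.exists_eq_transpose_mul_self
  have hnorm : ∀ Z : Matrix n m ℝ, (Zᵀ * (Sᵀ * S) * Z).trace = ‖S * Z‖ ^ 2 := fun Z => by
    rw [← trace_transpose_mul_self_eq_frobenius_norm_sq, transpose_mul]
    simp only [Matrix.mul_assoc]
  rw [hnorm, hnorm, hnorm, Real.sqrt_sq (norm_nonneg _), Real.sqrt_sq (norm_nonneg _),
    Matrix.mul_sub]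
  gcongr
  exact norm_sub_le _ _

end Frobenius

end LoewnerOrder

section KyFan

variable {n : Type*} [Fintype n]

theorem Matrix.IsHermitian.exists_eq_mul_diagonal_mul_transpose [DecidableEq n]
    {M : Matrix n n ℝ} (hM : M.IsHermitian) :
    ∃ Q : Matrix n n ℝ, Qᵀ * Q = 1 ∧ M = Q * diagonal hM.eigenvalues * Qᵀ := by
  refine ⟨hM.eigenvectorUnitary, ?_, ?_⟩
  · simpa [star_eq_conjTranspose, conjTranspose_eq_transpose_of_trivial] using
      Unitary.coe_star_mul_self hM.eigenvectorUnitary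
  · simpa [Unitary.conjStarAlgAut_apply, star_eq_conjTranspose,
      conjTranspose_eq_transpose_of_trivial] using hM.spectral_theorem

theorem sortedEigs.exists_perm {m : ℕ} {M : Matrix (Fin m) (Fin m) ℝ} {μ : Fin m → ℝ}
    (hμ : sortedEigs M μ) (hM : M.IsHermitian) :
    ∃ σ : Equiv.Perm (Fin m), μ = hM.eigenvalues ∘ σ := by
  set ν := hM.eigenvalues
  have hroots : Multiset.map μ Finset.univ.val = Multiset.map ν Finset.univ.val := by
    have h := hM.roots_charpoly_eq_eigenvalues
    rw [hμ.2, Polynomial.roots_prod _ _ (Finset.prod_ne_zero_iff.mpr fun i _ =>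
      Polynomial.X_sub_C_ne_zero _)] at h
    simpa using h
  rw [Fin.univ_val_map, Fin.univ_val_map, Multiset.coe_eq_coe] at hroots
  refine ⟨Tuple.sort ν, List.ofFn_injective (List.Perm.eq_of_pairwise' (r := (· ≤ ·)) ?_ ?_
    (hroots.trans (Equiv.Perm.ofFn_comp_perm _ ν).symm))⟩
  · exact List.pairwise_ofFn.2 fun i j hij => hμ.1 hij.le
  · exact List.pairwise_ofFn.2 fun i j hij => Tuple.monotone_sort ν hij.le

theorem sum_castLE_le_sum_mul_of_monotone {m k : ℕ} (hk : k ≤ m) {g : Fin m → ℝ}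
    (hg : Monotone g) {u : Fin m → ℝ} (hu0 : ∀ j, 0 ≤ u j) (hu1 : ∀ j, u j ≤ 1)
    (hsum : ∑ j, u j = k) :
    ∑ i : Fin k, g (Fin.castLE hk i) ≤ ∑ j, g j * u j := by
  set s := Finset.univ.filter fun j : Fin m => (j : ℕ) < k
  have hs : Finset.univ.map (Fin.castLEEmb hk) = s := by
    ext j
    simp only [Finset.mem_map, Finset.mem_univ, true_and, Fin.castLEEmb_apply, s,
      Finset.mem_filter]
    exact ⟨fun ⟨i, hi⟩ => hi ▸ i.2, fun hj => ⟨⟨j, hj⟩, rfl⟩⟩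
  have hhead : ∀ f : Fin m → ℝ, ∑ i : Fin k, f (Fin.castLE hk i) = ∑ j ∈ s, f j := fun f => by
    rw [← hs, Finset.sum_map]; rfl
  obtain ⟨θ, hlo, hhi⟩ : ∃ θ, (∀ j ∈ s, g j ≤ θ) ∧ ∀ j ∉ s, θ ≤ g j := by
    by_cases h : k < m
    · refine ⟨g ⟨k, h⟩, fun j hj => hg (show (j : ℕ) ≤ k by simp [s] at hj; omega),
        fun j hj => hg (show k ≤ (j : ℕ) by simpa [s] using hj)⟩
    · refine ⟨∑ j, |g j|, fun j _ => (le_abs_self _).trans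
        (Finset.single_le_sum (fun j _ => abs_nonneg (g j)) (Finset.mem_univ j)), fun j hj => ?_⟩
      simp [s] at hj; omega
  have hcard : ∑ j ∈ s, (1 : ℝ) = ∑ j, u j := by
    rw [hsum, ← hhead]; simp
  calc ∑ i : Fin k, g (Fin.castLE hk i) = ∑ j ∈ s, g j := hhead g
    _ ≤ ∑ j ∈ s, (g j * u j + θ * (1 - u j)) :=
        Finset.sum_le_sum fun j hj => by nlinarith [hlo j hj, hu1 j]
    _ = ∑ j ∈ s, g j * u j + θ * ∑ j ∉ s, u j := by
        rw [Finset.sum_add_distrib, ← Finset.mul_sum, Finset.sum_sub_distrib, hcard,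
          ← Finset.sum_add_sum_compl s u]
        ring
    _ ≤ ∑ j ∈ s, g j * u j + ∑ j ∉ s, g j * u j := by
        gcongr
        rw [Finset.mul_sum]
        exact Finset.sum_le_sum fun j hj => by
          nlinarith [hhi j (Finset.mem_compl.mp hj), hu0 j]
    _ = ∑ j, g j * u j := Finset.sum_add_sum_compl s _

theorem sortedEigs.sum_head_le_trace_mul {m k : ℕ} (hk : k ≤ m) {M P : Matrix (Fin m) (Fin m) ℝ}
    {μ : Fin m → ℝ} (hμ : sortedEigs M μ) (hM : M.IsHermitian) (hP : P.PosSemidef)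
    (hP1 : (1 - P).PosSemidef) (htr : P.trace = k) :
    ∑ i : Fin k, μ (Fin.castLE hk i) ≤ (P * M).trace := by
  obtain ⟨σ, hσ⟩ := hμ.exists_perm hM
  obtain ⟨Q, hQ, hMQ⟩ := hM.exists_eq_mul_diagonal_mul_transpose
  generalize hM.eigenvalues = ν at hσ hMQ
  subst hσ hMQ
  have hQ' : Q * Qᵀ = 1 := mul_eq_one_comm.mp hQ
  set R := Qᵀ * P * Q
  have hR0 : ∀ a, 0 ≤ R a a := fun a => by
    simpa [conjTranspose_eq_transpose_of_trivial] using
      (hP.conjTranspose_mul_mul_same Q).diag_nonneg (i := a)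
  have hR1 : ∀ a, R a a ≤ 1 := fun a => by
    have h := (hP1.conjTranspose_mul_mul_same Q).diag_nonneg (i := a)
    rw [conjTranspose_eq_transpose_of_trivial, Matrix.mul_sub, Matrix.sub_mul, Matrix.mul_one, hQ]
      at h
    simpa [one_apply_eq, R] using h
  have hRtr : ∑ a, R a a = k := by
    rw [← htr, show ∑ a, R a a = R.trace from rfl, trace_mul_cycle, hQ', Matrix.one_mul]
  have htrPM : (P * (Q * diagonal ν * Qᵀ)).trace = ∑ a, ν a * R a a := by
    rw [← Matrix.mul_assoc, ← Matrix.mul_assoc, trace_mul_cycle, ← Matrix.mul_assoc]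
    simp [trace, mul_diagonal, R, mul_comm]
  rw [htrPM, ← Equiv.sum_comp σ]
  exact sum_castLE_le_sum_mul_of_monotone hk hμ.1 (fun j => hR0 _) (fun j => hR1 _)
    ((Equiv.sum_comp σ fun a => R a a).trans hRtr)

end KyFan

section Compression

variable {m n : Type*} [Fintype m] [Fintype n]

theorem isStarProjection_mul_inv_mul_transpose [DecidableEq n] {B : Matrix m n ℝ}
    (hB : IsUnit (Bᵀ * B)) : IsStarProjection (B * (Bᵀ * B)⁻¹ * Bᵀ) where
  isIdempotentElem := by
    have h : (Bᵀ * B)⁻¹ * (Bᵀ * B) = 1 := nonsing_inv_mul _ ((isUnit_iff_isUnit_det _).mp hB)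
    simp only [IsIdempotentElem, Matrix.mul_assoc]
    rw [← Matrix.mul_assoc Bᵀ B, ← Matrix.mul_assoc _ (Bᵀ * B), h, Matrix.one_mul]
  isSelfAdjoint := by
    rw [IsSelfAdjoint, star_eq_conjTranspose, conjTranspose_eq_transpose_of_trivial]
    simp [Matrix.mul_assoc, transpose_nonsing_inv]

theorem trace_mul_inv_mul_transpose [DecidableEq n] {B : Matrix m n ℝ} (hB : IsUnit (Bᵀ * B)) :
    (B * (Bᵀ * B)⁻¹ * Bᵀ).trace = Fintype.card n := by
  rw [trace_mul_cycle, mul_nonsing_inv _ ((isUnit_iff_isUnit_det _).mp hB), trace_one]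

theorem isStarProjection_transpose_mul_self [DecidableEq m] {C : Matrix m n ℝ} (hC : C * Cᵀ = 1) :
    IsStarProjection (Cᵀ * C) where
  isIdempotentElem := by
    rw [IsIdempotentElem, Matrix.mul_assoc, ← Matrix.mul_assoc C, hC, Matrix.one_mul]
  isSelfAdjoint := by
    rw [IsSelfAdjoint, star_eq_conjTranspose, conjTranspose_eq_transpose_of_trivial,
      transpose_mul, transpose_transpose]

theorem transpose_mul_self_eq_one_sub {k : Type*} [Fintype k] [DecidableEq m] [DecidableEq n]
    [DecidableEq k] {C : Matrix m n ℝ} (hC : C * Cᵀ = 1) {V : Matrix n k ℝ} (hV : Vᵀ * V = 1) :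
    (C * V)ᵀ * (C * V) = 1 - ((1 - Cᵀ * C) * V)ᵀ * ((1 - Cᵀ * C) * V) := by
  have hproj := (isStarProjection_transpose_mul_self hC).one_sub
  have hsymm : (1 - Cᵀ * C)ᵀ = 1 - Cᵀ * C := by simp
  have hcompl : ((1 - Cᵀ * C) * V)ᵀ * ((1 - Cᵀ * C) * V) = Vᵀ * ((1 - Cᵀ * C) * V) := by
    rw [transpose_mul, hsymm, Matrix.mul_assoc, ← Matrix.mul_assoc (1 - Cᵀ * C),
      hproj.isIdempotentElem.eq]
  rw [hcompl, Matrix.sub_mul, Matrix.mul_sub, Matrix.one_mul, hV, sub_sub_cancel, transpose_mul]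
  simp only [Matrix.mul_assoc]

theorem transpose_submatrix_mul_mul_submatrix {k : Type*} [DecidableEq n] [DecidableEq k]
    {U : Matrix n n ℝ} (hU : Uᵀ * U = 1) (μ : n → ℝ) {c : k → n} (hc : Function.Injective c) :
    (U.submatrix id c)ᵀ * (U * diagonal μ * Uᵀ) * U.submatrix id c = diagonal (μ ∘ c) := by
  rw [transpose_submatrix, ← submatrix_id_id (U * diagonal μ * Uᵀ),
    ← submatrix_mul _ _ _ _ _ Function.bijective_id,
    ← submatrix_mul _ _ _ _ _ Function.bijective_id]
  simp only [← Matrix.mul_assoc, hU, Matrix.one_mul]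
  rw [Matrix.mul_assoc, hU, Matrix.mul_one, submatrix_diagonal _ _ hc]

theorem transpose_submatrix_mul_self {k : Type*} [DecidableEq n] [DecidableEq k]
    {U : Matrix n n ℝ} (hU : Uᵀ * U = 1) {c : k → n} (hc : Function.Injective c) :
    (U.submatrix id c)ᵀ * U.submatrix id c = 1 := by
  rw [transpose_submatrix, ← submatrix_mul _ _ _ _ _ Function.bijective_id, hU, submatrix_one _ hc]

theorem sortedEigs.sum_head_le_trace_div {ι : Type*} [Fintype ι] [DecidableEq ι] {n k : ℕ}
    (hk : k ≤ n) {A : Matrix ι ι ℝ} (hA : A.PosSemidef) {C : Matrix (Fin n) ι ℝ}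
    (hC : C * Cᵀ = 1) {V : Matrix ι (Fin k) ℝ} (hV : Vᵀ * V = 1) {μc : Fin n → ℝ}
    (hμc : sortedEigs (C * A * Cᵀ) μc)
    (hδ : (((1 - Cᵀ * C) * V)ᵀ * ((1 - Cᵀ * C) * V)).trace < 1) :
    ∑ i : Fin k, μc (Fin.castLE hk i) ≤ ((Cᵀ * C * V)ᵀ * A * (Cᵀ * C * V)).trace /
      (1 - (((1 - Cᵀ * C) * V)ᵀ * ((1 - Cᵀ * C) * V)).trace) := by
  set F := (1 - Cᵀ * C) * V
  set δ := (Fᵀ * F).trace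
  set B := C * V
  have hδ' : 0 < 1 - δ := sub_pos.mpr hδ
  have hGδ : (Bᵀ * B - (1 - δ) • 1).PosSemidef := by
    convert posSemidef_trace_smul_one_sub_transpose_mul_self F using 1
    rw [transpose_mul_self_eq_one_sub hC hV, sub_smul, one_smul]
    abel
  have hG : IsUnit (Bᵀ * B) := (posDef_of_posSemidef_sub_smul_one hδ' hGδ).isUnit
  have hP := isStarProjection_mul_inv_mul_transpose hG
  have hM : (C * A * Cᵀ).IsHermitian := by
    simpa [conjTranspose_eq_transpose_of_trivial] using
      (hA.mul_mul_conjTranspose_same C).isHermitian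
  have hT : (Bᵀ * (C * A * Cᵀ) * B).PosSemidef := by
    simpa [conjTranspose_eq_transpose_of_trivial] using
      (hA.mul_mul_conjTranspose_same C).conjTranspose_mul_mul_same B
  calc ∑ i : Fin k, μc (Fin.castLE hk i) ≤ (B * (Bᵀ * B)⁻¹ * Bᵀ * (C * A * Cᵀ)).trace :=
        hμc.sum_head_le_trace_mul hk hM hP.posSemidef hP.one_sub.posSemidef
          (by simp [trace_mul_inv_mul_transpose hG])
    _ = ((Bᵀ * B)⁻¹ * (Bᵀ * (C * A * Cᵀ) * B)).trace := by
        rw [Matrix.mul_assoc, Matrix.mul_assoc, trace_mul_comm]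
        simp only [Matrix.mul_assoc]
    _ ≤ (1 - δ)⁻¹ * (Bᵀ * (C * A * Cᵀ) * B).trace :=
        hT.trace_mul_le (posSemidef_inv_smul_one_sub_inv hδ' hGδ)
    _ = ((Cᵀ * C * V)ᵀ * A * (Cᵀ * C * V)).trace / (1 - δ) := by
        rw [div_eq_inv_mul]
        simp only [B, transpose_mul, transpose_transpose, Matrix.mul_assoc]

end Compression

theorem head_eigenvalue_sum_bound_general {N n k : ℕ} (hk : k ≤ n) (hnN : n ≤ N)
    (A : Matrix (Fin N) (Fin N) ℝ) (hA : A.PosSemidef)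
    (hmax : ∀ (σ : ℝ) (v : Fin N → ℝ), v ≠ 0 → A.mulVec v = σ • v → σ ≤ 2)
    (C : Matrix (Fin n) (Fin N) ℝ) (hC : C * Cᵀ = 1)
    (μ : Fin N → ℝ) (U : Matrix (Fin N) (Fin N) ℝ)
    (hUorth : Uᵀ * U = 1)
    (hdecomp : A = U * Matrix.diagonal μ * Uᵀ)
    (δ : ℝ)
    (hδ : δ = frobSq ((1 - Cᵀ * C) * U.submatrix id (Fin.castLE (hk.trans hnN))))
    (hδ1 : δ < 1)
    (μc : Fin n → ℝ) (hμc : sortedEigs (C * A * Cᵀ) μc) :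
    ∑ i : Fin k, μc (Fin.castLE hk i) ≤
      (Real.sqrt (∑ i : Fin k, μ (Fin.castLE (hk.trans hnN) i)) + Real.sqrt (2 * δ)) ^ 2
        / (1 - δ) := by
  set c := Fin.castLE (hk.trans hnN)
  have hc : Function.Injective c := Fin.castLE_injective _
  set V := U.submatrix id c
  set F := (1 - Cᵀ * C) * V
  rw [frobSq, ← trace_transpose_mul_self] at hδ
  have hVAV : (Vᵀ * A * V).trace = ∑ i : Fin k, μ (c i) := by
    rw [hdecomp, transpose_submatrix_mul_mul_submatrix hUorth μ hc, trace_diagonal]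
    rfl
  have hFAF : (Fᵀ * A * F).trace ≤ 2 * δ := by
    simpa [hδ] using trace_mul_mul_transpose_le
      (posSemidef_smul_one_sub_of_eigenvalue_le hUorth hdecomp hmax) Fᵀ
  have hCCV : Cᵀ * C * V = V - F := by simp [F, Matrix.sub_mul]
  have hcompress : ∑ i : Fin k, μc (Fin.castLE hk i) ≤
      ((Cᵀ * C * V)ᵀ * A * (Cᵀ * C * V)).trace / (1 - (Fᵀ * F).trace) :=
    hμc.sum_head_le_trace_div hk hA hC (transpose_submatrix_mul_self hUorth hc) (hδ ▸ hδ1)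
  rw [← hδ, hCCV] at hcompress
  refine hcompress.trans ?_
  gcongr ?_ / _
  refine (trace_transpose_mul_mul_sub_le hA V F).trans ?_
  rw [hVAV]
  gcongr

/-- **Courant–Fischer-type bound for the head eigenvalue sums.**
For symmetric PSD `A` with largest eigenvalue at most `2`, `C Cᵀ = I_n`, and `U_k`
the first `k` columns of an orthogonal eigenbasis of `A` sorted by nondecreasing
eigenvalue, if `δ = ‖(I - CᵀC) U_k‖_F² < 1` then
`∑_{i≤k} λ_c(i) ≤ (√(∑_{i≤k} λ(i)) + √(2δ))² / (1 - δ)`. -/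
theorem head_eigenvalue_sum_bound {N n k : ℕ} (hk : k ≤ n) (hnN : n ≤ N)
    (A : Matrix (Fin N) (Fin N) ℝ) (hA : A.PosSemidef)
    (hmax : ∀ (σ : ℝ) (v : Fin N → ℝ), v ≠ 0 → A.mulVec v = σ • v → σ ≤ 2)
    (C : Matrix (Fin n) (Fin N) ℝ) (hC : C * Cᵀ = 1)
    (μ : Fin N → ℝ) (U : Matrix (Fin N) (Fin N) ℝ)
    (hUorth : Uᵀ * U = 1) (hmono : Monotone μ)
    (hdecomp : A = U * Matrix.diagonal μ * Uᵀ)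
    (δ : ℝ)
    (hδ : δ = frobSq ((1 - Cᵀ * C) * U.submatrix id (Fin.castLE (hk.trans hnN))))
    (hδ1 : δ < 1)
    (μc : Fin n → ℝ) (hμc : sortedEigs (C * A * Cᵀ) μc) :
    ∑ i : Fin k, μc (Fin.castLE hk i) ≤
      (Real.sqrt (∑ i : Fin k, μ (Fin.castLE (hk.trans hnN) i)) + Real.sqrt (2 * δ)) ^ 2
        / (1 - δ) :=
  head_eigenvalue_sum_bound_general hk hnN A hA hmax C hC μ U hUorth hdecomp δ hδ hδ1 μc hμc
end
end
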